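/- Along the curve of constant-radius CMC data one has the identity D''(r_m) = (2/3)·V(r_m)⁻¹·(Λ - 3r_m⁻⁴·[(r_m - 3M)² + r_m(r_m - 2M)]); consequently V(r_m)·D''(r_m) → 2Λ/3 and hence T_m(r_m) := √2·π·(V(r_m)·D''(r_m))^{-1/2} → √(3/Λ)·π as r_m → ∞. -/

import Mathlib

/-!
At `r = r_m` the choice of `K` and `C` makes the profile `g(r) = K r / 3 - C / r²` equal to
`-s` with `s = √(-V(r_m))`, so `D(r_m) = 0`, and `D'' = V'' + 2 (g'² + g g'')` is explicit there.
Eliminating `Λ` through `V(r_m) = -s²` gives the identity for `D''(r_m)`. It yields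
`V·D'' = 2Λ/3 - 2 r⁻⁴ (2r² - 8Mr + 9M²) → 2Λ/3`, and the limit of `T_m` follows by continuity
of `x ↦ √2 π / √x` at `2Λ/3 > 0`.
-/

open Filter Topology Real

noncomputable section

/- The potential `V` and, as functions of `r_m`, the constants `K` and `C` of the data. -/
def sdsPotential (M Λ r : ℝ) : ℝ := 1 - 2 * M / r - Λ * r ^ 2 / 3

def cmcK (M Λ r : ℝ) : ℝ :=
  (3 * M - r) / (r ^ 2 * √(-sdsPotential M Λ r)) - (3 / r) * √(-sdsPotential M Λ r)

def cmcC (M Λ r : ℝ) : ℝ := (r / 3) * (3 * M - r) / √(-sdsPotential M Λ r)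

end

lemma deriv_deriv_eq_of_eventually_hasDerivAt {f f' : ℝ → ℝ} {x f'' : ℝ}
    (hf : ∀ᶠ y in 𝓝 x, HasDerivAt f (f' y) y) (hf' : HasDerivAt f' f'' x) :
    deriv (deriv f) x = f'' :=
  (hf'.congr_of_eventuallyEq (hf.mono fun _ hy => hy.deriv)).deriv

lemma hasDerivAt_const_div_pow (c : ℝ) (n : ℕ) {r : ℝ} (hr : r ≠ 0) :
    HasDerivAt (fun x => c / x ^ n) (-(n * c) / r ^ (n + 1)) r := by
  have h := ((hasDerivAt_pow n r).inv (pow_ne_zero n hr)).const_mul c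
  simp only [div_eq_mul_inv]
  refine h.congr_deriv ?_
  rcases n with _ | n
  · simp
  · rw [Nat.add_sub_cancel, pow_succ]
    push_cast
    field_simp
    ring

section Derivatives

variable (M Λ a b : ℝ) {r : ℝ}

lemma hasDerivAt_sdsPotential (hr : r ≠ 0) :
    HasDerivAt (sdsPotential M Λ) (2 * M / r ^ 2 - 2 * Λ * r / 3) r := by
  have h := ((hasDerivAt_const r 1).sub (hasDerivAt_const_div_pow (2 * M) 1 hr)).sub
    (((hasDerivAt_pow 2 r).const_mul Λ).div_const 3)
  simp only [pow_one] at h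
  refine h.congr_deriv ?_
  push_cast; ring

lemma hasDerivAt_deriv_sdsPotential (hr : r ≠ 0) :
    HasDerivAt (fun x => 2 * M / x ^ 2 - 2 * Λ * x / 3) (-4 * M / r ^ 3 - 2 * Λ / 3) r := by
  have h := (hasDerivAt_const_div_pow (2 * M) 2 hr).sub
    (((hasDerivAt_id r).const_mul (2 * Λ)).div_const 3)
  refine h.congr_deriv ?_
  push_cast; ring

lemma hasDerivAt_profile (hr : r ≠ 0) :
    HasDerivAt (fun x => a * x / 3 - b / x ^ 2) (a / 3 + 2 * b / r ^ 3) r := by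
  have h := (((hasDerivAt_id r).const_mul a).div_const 3).sub (hasDerivAt_const_div_pow b 2 hr)
  refine h.congr_deriv ?_
  push_cast; ring

lemma hasDerivAt_deriv_profile (hr : r ≠ 0) :
    HasDerivAt (fun x => a / 3 + 2 * b / x ^ 3) (-6 * b / r ^ 4) r := by
  have h := (hasDerivAt_const r (a / 3)).add (hasDerivAt_const_div_pow (2 * b) 3 hr)
  refine h.congr_deriv ?_
  push_cast; ring

lemma deriv_deriv_sdsPotential_add_sq_profile (hr : r ≠ 0) :
    deriv (deriv fun x => sdsPotential M Λ x + (a * x / 3 - b / x ^ 2) ^ 2) r =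
      -4 * M / r ^ 3 - 2 * Λ / 3 +
        2 * ((a / 3 + 2 * b / r ^ 3) ^ 2 + (a * r / 3 - b / r ^ 2) * (-6 * b / r ^ 4)) := by
  refine deriv_deriv_eq_of_eventually_hasDerivAt
    (f' := fun x => 2 * M / x ^ 2 - 2 * Λ * x / 3 +
      2 * ((a * x / 3 - b / x ^ 2) * (a / 3 + 2 * b / x ^ 3))) ?_ ?_
  · filter_upwards [eventually_ne_nhds hr] with x hx
    refine ((hasDerivAt_sdsPotential M Λ hx).add
      ((hasDerivAt_profile a b hx).pow 2)).congr_deriv ?_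
    push_cast; ring
  · refine ((hasDerivAt_deriv_sdsPotential M Λ hr).add
      (((hasDerivAt_profile a b hr).mul
        (hasDerivAt_deriv_profile a b hr)).const_mul 2)).congr_deriv ?_
    ring

end Derivatives

theorem deriv_deriv_cmc_eq {M Λ r : ℝ} (hr : r ≠ 0) (hV : sdsPotential M Λ r < 0) :
    deriv (deriv fun x => sdsPotential M Λ x + (cmcK M Λ r * x / 3 - cmcC M Λ r / x ^ 2) ^ 2) r =
      (2 / 3) * (sdsPotential M Λ r)⁻¹ *
        (Λ - 3 * r⁻¹ ^ 4 * ((r - 3 * M) ^ 2 + r * (r - 2 * M))) := by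
  set s := √(-sdsPotential M Λ r) with hs_def
  have hs : s ≠ 0 := (sqrt_pos.2 (neg_pos.2 hV)).ne'
  have hVs : sdsPotential M Λ r = -s ^ 2 := by rw [sq_sqrt (neg_pos.2 hV).le]; ring
  have hg : cmcK M Λ r * r / 3 - cmcC M Λ r / r ^ 2 = -s := by
    simp only [cmcK, cmcC, ← hs_def]; field_simp; ring
  have hg' : cmcK M Λ r / 3 + 2 * cmcC M Λ r / r ^ 3 = (3 * M - r) / (r ^ 2 * s) - s / r := by
    simp only [cmcK, cmcC, ← hs_def]; field_simp; ring
  have hΛ : Λ = 3 * (s ^ 2 + 1) / r ^ 2 - 6 * M / r ^ 3 := by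
    rw [sdsPotential] at hVs; field_simp at hVs ⊢; linear_combination -hVs
  rw [deriv_deriv_sdsPotential_add_sq_profile M Λ _ _ hr, hg, hg', hVs, cmcC, ← hs_def, hΛ]
  field_simp
  ring

lemma tendsto_two_div_three_mul_sub_inv_pow_four_mul (M Λ : ℝ) :
    Tendsto (fun r : ℝ => (2 / 3) * (Λ - 3 * r⁻¹ ^ 4 * ((r - 3 * M) ^ 2 + r * (r - 2 * M))))
      atTop (𝓝 (2 * Λ / 3)) := by
  let p : ℝ → ℝ := fun x => (2 / 3) * (Λ - 3 * x ^ 2 * ((1 - 3 * M * x) ^ 2 + (1 - 2 * M * x)))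
  have hp0 : p 0 = 2 * Λ / 3 := by simp only [p]; ring
  have hp : Tendsto (fun r : ℝ => p r⁻¹) atTop (𝓝 (2 * Λ / 3)) :=
    hp0 ▸ ((by fun_prop : Continuous p).tendsto 0).comp tendsto_inv_atTop_zero
  refine hp.congr' ?_
  filter_upwards [eventually_ne_atTop 0] with r hr
  simp only [p]; field_simp

lemma sqrt_two_mul_pi_mul_inv_sqrt {Λ : ℝ} (hΛ : 0 < Λ) :
    √2 * π * (√(2 * Λ / 3))⁻¹ = √(3 / Λ) * π := by
  have h : √(3 / Λ) * √(2 * Λ / 3) = √2 := by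
    rw [← sqrt_mul (by positivity)]; congr 1; field_simp
  rw [← h]
  field_simp [(sqrt_pos.2 (by positivity : 0 < 2 * Λ / 3)).ne']

theorem stmt_14_general (Λ M : ℝ) (hΛ : 0 < Λ)
    (V : ℝ → ℝ) (hV : ∀ r, V r = 1 - 2 * M / r - Λ * r ^ 2 / 3)
    (r_c : ℝ) (hc : 0 < r_c)
    (hlarger : ∀ r, r_c < r → V r < 0)
    (Km Cm : ℝ → ℝ)
    (hKm : ∀ r, Km r = (3 * M - r) / (r ^ 2 * Real.sqrt (-V r)) -
      (3 / r) * Real.sqrt (-V r))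
    (hCm : ∀ r, Cm r = (r / 3) * (3 * M - r) / Real.sqrt (-V r))
    (D'' : ℝ → ℝ)
    (hD'' : ∀ rm, D'' rm =
      deriv (deriv (fun r => V r + (Km rm * r / 3 - Cm rm / r ^ 2) ^ 2)) rm) :
    (∀ rm, r_c < rm → D'' rm = (2 / 3) * (V rm)⁻¹ *
      (Λ - 3 * rm⁻¹ ^ 4 * ((rm - 3 * M) ^ 2 + rm * (rm - 2 * M)))) ∧
    Tendsto (fun rm => V rm * D'' rm) atTop (nhds (2 * Λ / 3)) ∧
    Tendsto (fun rm => Real.sqrt 2 * π * (Real.sqrt (V rm * D'' rm))⁻¹) atTop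
      (nhds (Real.sqrt (3 / Λ) * π)) := by
  obtain rfl : V = sdsPotential M Λ := funext hV
  obtain rfl : Km = cmcK M Λ := funext hKm
  obtain rfl : Cm = cmcC M Λ := funext hCm
  have hD : ∀ rm, r_c < rm → D'' rm = (2 / 3) * (sdsPotential M Λ rm)⁻¹ *
      (Λ - 3 * rm⁻¹ ^ 4 * ((rm - 3 * M) ^ 2 + rm * (rm - 2 * M))) := fun rm hrm => by
    rw [hD'', deriv_deriv_cmc_eq (hc.trans hrm).ne' (hlarger rm hrm)]
  have hVD : Tendsto (fun rm => sdsPotential M Λ rm * D'' rm) atTop (𝓝 (2 * Λ / 3)) := by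
    refine (tendsto_two_div_three_mul_sub_inv_pow_four_mul M Λ).congr' ?_
    filter_upwards [eventually_gt_atTop r_c] with rm hrm
    rw [hD rm hrm]
    field_simp [(hlarger rm hrm).ne]
  refine ⟨hD, hVD, ?_⟩
  rw [← sqrt_two_mul_pi_mul_inv_sqrt hΛ]
  exact (((continuous_sqrt.tendsto _).inv₀ (sqrt_pos.2 (by positivity)).ne').const_mul _).comp hVD

/-- Along the curve of constant-radius CMC data,
D''(r_m) = (2/3)·V(r_m)⁻¹·(Λ - 3r_m⁻⁴·[(r_m - 3M)² + r_m(r_m - 2M)]); hence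
V(r_m)·D''(r_m) → 2Λ/3 and T_m(r_m) → √(3/Λ)·π as r_m → ∞. -/
theorem stmt_14 (Λ M : ℝ) (hΛ : 0 < Λ) (hM : 0 < M) (h9 : 9 * M ^ 2 * Λ < 1)
    (V : ℝ → ℝ) (hV : ∀ r, V r = 1 - 2 * M / r - Λ * r ^ 2 / 3)
    (r_c : ℝ) (hc : 0 < r_c) (hVc : V r_c = 0)
    (hlarger : ∀ r, r_c < r → V r < 0)
    (Km Cm : ℝ → ℝ)
    (hKm : ∀ r, Km r = (3 * M - r) / (r ^ 2 * Real.sqrt (-V r)) -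
      (3 / r) * Real.sqrt (-V r))
    (hCm : ∀ r, Cm r = (r / 3) * (3 * M - r) / Real.sqrt (-V r))
    (D'' : ℝ → ℝ)
    (hD'' : ∀ rm, D'' rm =
      deriv (deriv (fun r => V r + (Km rm * r / 3 - Cm rm / r ^ 2) ^ 2)) rm) :
    (∀ rm, r_c < rm → D'' rm = (2 / 3) * (V rm)⁻¹ *
      (Λ - 3 * rm⁻¹ ^ 4 * ((rm - 3 * M) ^ 2 + rm * (rm - 2 * M)))) ∧
    Tendsto (fun rm => V rm * D'' rm) atTop (nhds (2 * Λ / 3)) ∧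
    Tendsto (fun rm => Real.sqrt 2 * π * (Real.sqrt (V rm * D'' rm))⁻¹) atTop
      (nhds (Real.sqrt (3 / Λ) * π)) :=
  stmt_14_general Λ M hΛ V hV r_c hc hlarger Km Cm hKm hCm D'' hD''
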